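/- arXiv:1909.03207 — 5 statements merged into one kernel-verified Lean document; each statement's English description precedes it below -/
import Mathlib

section
/- The map σ : sl(3,ℂ) → sl(3,ℂ) defined by σ(X) = −P Xᵀ P is a Lie algebra automorphism of sl(3,ℂ) (it is a ℂ-linear bijection preserving trace-zero matrices with σ([X,Y]) = [σ(X), σ(Y)] for all X, Y ∈ sl(3,ℂ)) of order exactly 6, i.e. σ⁶ = id and σʲ ≠ id for 1 ≤ j ≤ 5. -/
/-!
Since ε⁶ = 1 we have P² = 1, so σ is minus transposition followed by conjugation by P,
hence a Lie algebra automorphism of gl(3, ℂ) negating traces. Its square is conjugation by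
PPᵀ = diag(ε⁴, ε², 1), with inverse PᵀP = diag(ε², ε⁴, 1), and (PPᵀ)³ = 1 gives σ⁶ = id.
Odd powers of σ negate the (3,3) entry, and σ^{2k} multiplies the elementary matrix E₁₃ by
ε^{4k} ≠ 1 for k = 1, 2.
-/

open Complex Matrix

noncomputable section

abbrev M3 := Matrix (Fin 3) (Fin 3) ℂ

/-- ε = exp(iπ/3). -/
def eps : ℂ := Complex.exp (Real.pi * Complex.I / 3)

/-- The matrix P with rows (0, ε², 0), (ε⁴, 0, 0), (0, 0, 1). -/
def Pm : M3 := !![0, eps ^ 2, 0; eps ^ 4, 0, 0; 0, 0, 1]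

/-- σ(X) = −P Xᵀ P. -/
def sigmaL (X : M3) : M3 := -(Pm * Xᵀ * Pm)

theorem Set.bijOn_of_mapsTo_of_iterate_succ {α : Type*} {f : α → α} {s : Set α} {n : ℕ}
    (hs : Set.MapsTo f s s) (hf : ∀ x, f^[n + 1] x = x) : Set.BijOn f s s :=
  Set.InvOn.bijOn
    ⟨fun x _ => (Function.iterate_succ_apply f n x).symm.trans (hf x),
      fun x _ => (Function.iterate_succ_apply' f n x).symm.trans (hf x)⟩
    hs (hs.iterate n)

namespace Matrix

variable {n R : Type*} [Fintype n] [CommRing R]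

def negTransposeConj (P : Matrix n n R) : Matrix n n R →ₗ[R] Matrix n n R where
  toFun X := -(P * Xᵀ * P)
  map_add' X Y := by simp only [transpose_add, Matrix.mul_add, Matrix.add_mul, neg_add]
  map_smul' c X := by simp only [transpose_smul, Matrix.mul_smul, Matrix.smul_mul, smul_neg,
    RingHom.id_apply]

variable {P : Matrix n n R}

theorem negTransposeConj_apply (P X : Matrix n n R) : negTransposeConj P X = -(P * Xᵀ * P) :=
  rfl

theorem trace_negTransposeConj [DecidableEq n] (hP : P * P = 1) (X : Matrix n n R) :
    (negTransposeConj P X).trace = -X.trace := by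
  rw [negTransposeConj_apply, trace_neg, trace_mul_cycle, hP, Matrix.one_mul, trace_transpose]

theorem negTransposeConj_lie [DecidableEq n] (hP : P * P = 1) (X Y : Matrix n n R) :
    negTransposeConj P ⁅X, Y⁆ = ⁅negTransposeConj P X, negTransposeConj P Y⁆ := by
  have hcancel : ∀ A B : Matrix n n R, P * A * P * (P * B * P) = P * (A * B) * P := fun A B => by
    rw [show P * A * P * (P * B * P) = P * A * (P * P) * B * P by noncomm_ring, hP]
    noncomm_ring
  simp only [negTransposeConj_apply, Ring.lie_def, transpose_sub, transpose_mul, neg_mul_neg,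
    hcancel, Matrix.mul_sub, Matrix.sub_mul, neg_sub]

theorem negTransposeConj_negTransposeConj (P X : Matrix n n R) :
    negTransposeConj P (negTransposeConj P X) = P * Pᵀ * X * (Pᵀ * P) := by
  simp only [negTransposeConj_apply, transpose_neg, transpose_mul, transpose_transpose,
    Matrix.neg_mul, Matrix.mul_neg, neg_neg, Matrix.mul_assoc]

theorem negTransposeConj_iterate_two_mul [DecidableEq n] (P X : Matrix n n R) (k : ℕ) :
    (negTransposeConj P)^[2 * k] X = (P * Pᵀ) ^ k * X * (Pᵀ * P) ^ k := by
  induction k with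
  | zero => simp
  | succ k ih =>
    rw [show 2 * (k + 1) = 2 + 2 * k by ring, Function.iterate_add_apply, ih,
      Function.iterate_succ_apply', Function.iterate_one, negTransposeConj_negTransposeConj,
      pow_succ', pow_succ]
    simp only [Matrix.mul_assoc]

end Matrix

theorem isPrimitiveRoot_eps : IsPrimitiveRoot eps 6 := by
  convert Complex.isPrimitiveRoot_exp 6 (by norm_num) using 1
  rw [eps]
  congr 1
  push_cast
  ring

theorem eps_pow_six : eps ^ 6 = 1 := isPrimitiveRoot_eps.pow_eq_one

theorem eps_pow_eight : eps ^ 8 = eps ^ 2 := by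
  linear_combination eps ^ 2 * eps_pow_six

theorem sigmaL_eq_negTransposeConj : sigmaL = negTransposeConj Pm := rfl

theorem Pm_mul_Pm : Pm * Pm = 1 := by
  ext i j
  fin_cases i <;> fin_cases j <;>
    simp [Pm, Matrix.mul_apply, Fin.sum_univ_three, one_apply, ← pow_add, eps_pow_six]

theorem Pm_mul_transpose_Pm : Pm * Pmᵀ = diagonal ![eps ^ 4, eps ^ 2, 1] := by
  ext i j
  fin_cases i <;> fin_cases j <;>
    simp [Pm, Matrix.mul_apply, Fin.sum_univ_three, ← pow_add, eps_pow_eight]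

theorem transpose_Pm_mul_Pm : Pmᵀ * Pm = diagonal ![eps ^ 2, eps ^ 4, 1] := by
  ext i j
  fin_cases i <;> fin_cases j <;>
    simp [Pm, Matrix.mul_apply, Fin.sum_univ_three, ← pow_add, eps_pow_eight]

theorem trace_sigmaL (X : M3) : (sigmaL X).trace = -X.trace :=
  trace_negTransposeConj Pm_mul_Pm X

theorem sigmaL_lie (X Y : M3) : sigmaL ⁅X, Y⁆ = ⁅sigmaL X, sigmaL Y⁆ :=
  negTransposeConj_lie Pm_mul_Pm X Y

theorem sigmaL_iterate_two_mul_apply (X : M3) (k : ℕ) (i j : Fin 3) :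
    sigmaL^[2 * k] X i j = ![eps ^ 4, eps ^ 2, 1] i ^ k * X i j * ![eps ^ 2, eps ^ 4, 1] j ^ k := by
  rw [sigmaL_eq_negTransposeConj, negTransposeConj_iterate_two_mul, Pm_mul_transpose_Pm,
    transpose_Pm_mul_Pm, diagonal_pow, diagonal_pow, mul_diagonal, diagonal_mul, Pi.pow_apply,
    Pi.pow_apply]

theorem sigmaL_iterate_six (X : M3) : sigmaL^[6] X = X := by
  ext i j
  rw [show 6 = 2 * 3 from rfl, sigmaL_iterate_two_mul_apply]
  have h12 : eps ^ 12 = 1 := (isPrimitiveRoot_eps.pow_eq_one_iff_dvd 12).2 (by norm_num)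
  fin_cases i <;> fin_cases j <;> simp [← pow_mul, eps_pow_six, h12]

theorem sigmaL_apply_two_two (X : M3) : sigmaL X 2 2 = -X 2 2 := by
  rw [sigmaL, neg_apply, mul_apply, Fin.sum_univ_three]
  simp [Pm, Matrix.mul_apply, Fin.sum_univ_three]

theorem sigmaL_iterate_two_mul_add_one_apply_two_two (X : M3) (k : ℕ) :
    sigmaL^[2 * k + 1] X 2 2 = -X 2 2 := by
  rw [Function.iterate_succ_apply', sigmaL_apply_two_two, sigmaL_iterate_two_mul_apply]
  simp

theorem sigmaL_iterate_two_mul_single_apply (k : ℕ) :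
    sigmaL^[2 * k] (single 0 2 1) 0 2 = eps ^ (4 * k) := by
  simp [sigmaL_iterate_two_mul_apply, ← pow_mul]

theorem exists_trace_eq_zero_sigmaL_iterate_ne {j : ℕ} (hj1 : 1 ≤ j) (hj5 : j ≤ 5) :
    ∃ X : M3, X.trace = 0 ∧ sigmaL^[j] X ≠ X := by
  obtain ⟨k, rfl | rfl⟩ := Nat.even_or_odd' j
  · refine ⟨single 0 2 1, by simp, fun h => ?_⟩
    have h02 := congr_fun₂ h 0 2
    rw [sigmaL_iterate_two_mul_single_apply, single_apply_same,
      isPrimitiveRoot_eps.pow_eq_one_iff_dvd] at h02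
    omega
  · refine ⟨diagonal ![1, 0, -1], by simp [Fin.sum_univ_three], fun h => ?_⟩
    have h22 := congr_fun₂ h 2 2
    rw [sigmaL_iterate_two_mul_add_one_apply_two_two] at h22
    simp at h22
    norm_num at h22

/-- σ is a Lie algebra automorphism of sl(3,ℂ) of order exactly 6. -/
theorem statement0 :
    Set.BijOn sigmaL {X : M3 | X.trace = 0} {X : M3 | X.trace = 0} ∧
    (∀ (c : ℂ) (X Y : M3), sigmaL (c • X + Y) = c • sigmaL X + sigmaL Y) ∧
    (∀ X Y : M3, sigmaL ⁅X, Y⁆ = ⁅sigmaL X, sigmaL Y⁆) ∧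
    (∀ X : M3, X.trace = 0 → sigmaL^[6] X = X) ∧
    (∀ j : ℕ, 1 ≤ j → j ≤ 5 → ∃ X : M3, X.trace = 0 ∧ sigmaL^[j] X ≠ X) := by
  have hmaps : Set.MapsTo sigmaL {X : M3 | X.trace = 0} {X : M3 | X.trace = 0} :=
    fun X (hX : X.trace = 0) => show (sigmaL X).trace = 0 by rw [trace_sigmaL, hX, neg_zero]
  refine ⟨Set.bijOn_of_mapsTo_of_iterate_succ (n := 5) hmaps sigmaL_iterate_six,
    fun c X Y => by rw [sigmaL_eq_negTransposeConj, map_add, map_smul], sigmaL_lie,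
    fun X _ => sigmaL_iterate_six X, fun _ => exists_trace_eq_zero_sigmaL_iterate_ne⟩
end
end

section
/- Let 𝔤 be a finite-dimensional complex Lie algebra, k > 2 an integer, ζ = exp(2πi/k), and κ : 𝔤 → 𝔤 a Lie algebra automorphism with κᵏ = id. Let D ⊆ ℂ be open and let α₋₁, α₀′, α₀″, α₁ : D → 𝔤 be smooth maps satisfying pointwise κ(α₋₁) = ζ⁻¹ α₋₁, κ(α₀′) = α₀′, κ(α₀″) = α₀″, and κ(α₁) = ζ α₁. Suppose U := α₋₁ + α₀′ and V := α₀″ + α₁ satisfy the zero-curvature (integrability) equation U_z̄ − V_z = [U, V] on D. Then for every λ ∈ ℂ with λ ≠ 0, the maps U_λ := λ⁻¹ α₋₁ + α₀′ and V_λ := α₀″ + λ α₁ also satisfy (U_λ)_z̄ − (V_λ)_z = [U_λ, V_λ] on D. -/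
open Complex

noncomputable section

/-- Wirtinger derivative F_z = ½(F_x − i F_y). -/
def wz {E : Type*} [NormedAddCommGroup E] [NormedSpace ℂ E] (F : ℂ → E) (p : ℂ) : E :=
  (2 : ℂ)⁻¹ • (fderiv ℝ F p 1 - Complex.I • fderiv ℝ F p Complex.I)

/-- Wirtinger derivative F_z̄ = ½(F_x + i F_y). -/
def wzbar {E : Type*} [NormedAddCommGroup E] [NormedSpace ℂ E] (F : ℂ → E) (p : ℂ) : E :=
  (2 : ℂ)⁻¹ • (fderiv ℝ F p 1 + Complex.I • fderiv ℝ F p Complex.I)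

section helpers
variable {E : Type*} [NormedAddCommGroup E] [NormedSpace ℂ E]

lemma wzbar_add' {F G : ℂ → E} {p : ℂ} (hF : DifferentiableAt ℝ F p)
    (hG : DifferentiableAt ℝ G p) :
    wzbar (fun q => F q + G q) p = wzbar F p + wzbar G p := by
  simp only [wzbar, fderiv_fun_add hF hG, ContinuousLinearMap.add_apply]
  module

lemma wz_add' {F G : ℂ → E} {p : ℂ} (hF : DifferentiableAt ℝ F p)
    (hG : DifferentiableAt ℝ G p) :
    wz (fun q => F q + G q) p = wz F p + wz G p := by
  simp only [wz, fderiv_fun_add hF hG, ContinuousLinearMap.add_apply]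
  module

lemma wzbar_smul' (c : ℂ) {F : ℂ → E} {p : ℂ} (hF : DifferentiableAt ℝ F p) :
    wzbar (fun q => c • F q) p = c • wzbar F p := by
  simp only [wzbar, fderiv_fun_const_smul hF c, ContinuousLinearMap.smul_apply]
  module

lemma wz_smul' (c : ℂ) {F : ℂ → E} {p : ℂ} (hF : DifferentiableAt ℝ F p) :
    wz (fun q => c • F q) p = c • wz F p := by
  simp only [wz, fderiv_fun_const_smul hF c, ContinuousLinearMap.smul_apply]
  module

lemma eig_fderiv' [FiniteDimensional ℂ E] (κ : E ≃ₗ[ℂ] E) (c : ℂ) {F : ℂ → E} {p : ℂ}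
    (hF : DifferentiableAt ℝ F p)
    (heq : ∀ᶠ q in nhds p, κ (F q) = c • F q) (v : ℂ) :
    κ (fderiv ℝ F p v) = c • fderiv ℝ F p v := by
  have : FiniteDimensional ℝ E := FiniteDimensional.trans ℝ ℂ E
  let κL : E →L[ℝ] E := LinearMap.toContinuousLinearMap (κ.toLinearMap.restrictScalars ℝ)
  have h1 : fderiv ℝ (fun q => κ (F q)) p = κL.comp (fderiv ℝ F p) :=
    (κL.hasFDerivAt.comp p hF.hasFDerivAt).fderiv
  have h2 : fderiv ℝ (fun q => c • F q) p = c • fderiv ℝ F p := fderiv_const_smul hF c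
  have h3 : fderiv ℝ (fun q => κ (F q)) p = fderiv ℝ (fun q => c • F q) p :=
    Filter.EventuallyEq.fderiv_eq heq
  have := congrArg (fun (L : ℂ →L[ℝ] E) => L v) (h1.symm.trans (h3.trans h2))
  simpa [κL] using this

lemma eig_wzbar' [FiniteDimensional ℂ E] (κ : E ≃ₗ[ℂ] E) (c : ℂ) {F : ℂ → E} {p : ℂ}
    (hF : DifferentiableAt ℝ F p)
    (heq : ∀ᶠ q in nhds p, κ (F q) = c • F q) :
    κ (wzbar F p) = c • wzbar F p := by
  simp only [wzbar, map_smul, map_add, eig_fderiv' κ c hF heq]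
  module

lemma eig_wz' [FiniteDimensional ℂ E] (κ : E ≃ₗ[ℂ] E) (c : ℂ) {F : ℂ → E} {p : ℂ}
    (hF : DifferentiableAt ℝ F p)
    (heq : ∀ᶠ q in nhds p, κ (F q) = c • F q) :
    κ (wz F p) = c • wz F p := by
  simp only [wz, map_smul, map_sub, eig_fderiv' κ c hF heq]
  module

end helpers

/-- If the loop-independent zero curvature equation holds for U = α₋₁ + α₀′ and
V = α₀″ + α₁, with the αᵢ taking values in the appropriate eigenspaces of a finite-order
Lie algebra automorphism κ of order k > 2, then the λ-family U_λ = λ⁻¹α₋₁ + α₀′,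
V_λ = α₀″ + λα₁ satisfies the zero curvature equation for every λ ∈ ℂ*. -/
theorem statement14 {𝔤 : Type*} [NormedAddCommGroup 𝔤] [NormedSpace ℂ 𝔤]
    [FiniteDimensional ℂ 𝔤]
    (br : 𝔤 →ₗ[ℂ] 𝔤 →ₗ[ℂ] 𝔤)
    (hanti : ∀ x : 𝔤, br x x = 0)
    (hjacobi : ∀ x y z : 𝔤, br x (br y z) + br y (br z x) + br z (br x y) = 0)
    (k : ℕ) (hk : 2 < k)
    (ζ : ℂ) (hζ : ζ = Complex.exp (2 * Real.pi * Complex.I / k))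
    (κ : 𝔤 ≃ₗ[ℂ] 𝔤)
    (hκbr : ∀ x y : 𝔤, κ (br x y) = br (κ x) (κ y))
    (hκord : ∀ x : 𝔤, (⇑κ)^[k] x = x)
    (D : Set ℂ) (hD : IsOpen D)
    (αm1 α0' α0'' α1 : ℂ → 𝔤)
    (hαm1 : ContDiffOn ℝ (⊤ : ℕ∞) αm1 D) (hα0' : ContDiffOn ℝ (⊤ : ℕ∞) α0' D)
    (hα0'' : ContDiffOn ℝ (⊤ : ℕ∞) α0'' D) (hα1 : ContDiffOn ℝ (⊤ : ℕ∞) α1 D)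
    (heigm1 : ∀ p ∈ D, κ (αm1 p) = ζ⁻¹ • αm1 p)
    (heig0' : ∀ p ∈ D, κ (α0' p) = α0' p)
    (heig0'' : ∀ p ∈ D, κ (α0'' p) = α0'' p)
    (heig1 : ∀ p ∈ D, κ (α1 p) = ζ • α1 p)
    (hzc : ∀ p ∈ D,
      wzbar (fun q => αm1 q + α0' q) p - wz (fun q => α0'' q + α1 q) p
        = br (αm1 p + α0' p) (α0'' p + α1 p)) :
    ∀ lam : ℂ, lam ≠ 0 → ∀ p ∈ D,
      wzbar (fun q => lam⁻¹ • αm1 q + α0' q) p - wz (fun q => α0'' q + lam • α1 q) p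
        = br (lam⁻¹ • αm1 p + α0' p) (α0'' p + lam • α1 p) := by
  -- root of unity facts
  have hprim : IsPrimitiveRoot ζ k := by
    rw [hζ]
    exact Complex.isPrimitiveRoot_exp k (by omega)
  have hζ0 : ζ ≠ 0 := by rw [hζ]; exact Complex.exp_ne_zero _
  have hζ1 : ζ ≠ 1 := by
    have := hprim.pow_ne_one_of_pos_of_lt (l := 1) one_ne_zero (by omega)
    simpa using this
  have hζ2 : ζ ^ 2 ≠ 1 := hprim.pow_ne_one_of_pos_of_lt two_ne_zero hk
  intro lam hlam p hp
  have hDp : D ∈ nhds p := hD.mem_nhds hp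
  -- differentiability
  have dm1 : DifferentiableAt ℝ αm1 p :=
    ((hαm1.contDiffAt hDp).differentiableAt (by simp))
  have d0' : DifferentiableAt ℝ α0' p :=
    ((hα0'.contDiffAt hDp).differentiableAt (by simp))
  have d0'' : DifferentiableAt ℝ α0'' p :=
    ((hα0''.contDiffAt hDp).differentiableAt (by simp))
  have d1 : DifferentiableAt ℝ α1 p :=
    ((hα1.contDiffAt hDp).differentiableAt (by simp))
  -- eventual eigen equations
  have em1 : ∀ᶠ q in nhds p, κ (αm1 q) = ζ⁻¹ • αm1 q :=
    Filter.eventually_of_mem hDp heigm1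
  have e0' : ∀ᶠ q in nhds p, κ (α0' q) = (1 : ℂ) • α0' q := by
    filter_upwards [Filter.eventually_of_mem hDp heig0'] with q h; simpa using h
  have e0'' : ∀ᶠ q in nhds p, κ (α0'' q) = (1 : ℂ) • α0'' q := by
    filter_upwards [Filter.eventually_of_mem hDp heig0''] with q h; simpa using h
  have e1 : ∀ᶠ q in nhds p, κ (α1 q) = ζ • α1 q :=
    Filter.eventually_of_mem hDp heig1
  -- eigen equations for Wirtinger derivatives
  have km1 : κ (wzbar αm1 p) = ζ⁻¹ • wzbar αm1 p := eig_wzbar' κ _ dm1 em1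
  have k0' : κ (wzbar α0' p) = wzbar α0' p := by
    simpa using eig_wzbar' κ 1 d0' e0'
  have k0'' : κ (wz α0'' p) = wz α0'' p := by
    simpa using eig_wz' κ 1 d0'' e0''
  have k1 : κ (wz α1 p) = ζ • wz α1 p := eig_wz' κ _ d1 e1
  -- the three graded components
  set A : 𝔤 := wzbar αm1 p - br (αm1 p) (α0'' p) with hAdef
  set B : 𝔤 := wzbar α0' p - wz α0'' p - br (αm1 p) (α1 p) - br (α0' p) (α0'' p) with hBdef
  set C : 𝔤 := -wz α1 p - br (α0' p) (α1 p) with hCdef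
  -- eigen properties of A B C
  have hκA : κ A = ζ⁻¹ • A := by
    simp only [hAdef, map_sub, km1, hκbr, heigm1 p hp, heig0'' p hp, map_smul,
      LinearMap.smul_apply]
    module
  have hκB : κ B = B := by
    simp only [hBdef, map_sub, k0', k0'', hκbr, heigm1 p hp, heig0' p hp, heig0'' p hp,
      heig1 p hp, map_smul, LinearMap.smul_apply, smul_smul,
      inv_mul_cancel₀ hζ0, mul_inv_cancel₀ hζ0, one_smul]
  have hκC : κ C = ζ • C := by
    simp only [hCdef, map_neg, map_sub, k1, hκbr, heig0' p hp, heig1 p hp, map_smul,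
      LinearMap.smul_apply]
    module
  -- the zero curvature equation says A + B + C = 0
  have h1 : A + B + C = 0 := by
    have h := hzc p hp
    rw [wzbar_add' dm1 d0', wz_add' d0'' d1] at h
    simp only [map_add, LinearMap.add_apply] at h
    rw [hAdef, hBdef, hCdef]
    linear_combination (norm := module) h
  have h2 : ζ⁻¹ • A + B + ζ • C = 0 := by
    have := congrArg κ h1
    simpa [map_add, hκA, hκB, hκC] using this
  have h3 : ζ⁻¹ • (ζ⁻¹ • A) + B + ζ • (ζ • C) = 0 := by
    have := congrArg κ h2
    simpa [map_add, map_smul, hκA, hκB, hκC] using this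
  -- eliminate to get A = B = C = 0
  have hX : (1 - ζ⁻¹) • A + (1 - ζ) • C = 0 := by
    have : (1 - ζ⁻¹) • A + (1 - ζ) • C = (A + B + C) - (ζ⁻¹ • A + B + ζ • C) := by module
    rw [this, h1, h2, sub_zero]
  have hY : ζ⁻¹ • ((1 - ζ⁻¹) • A) + ζ • ((1 - ζ) • C) = 0 := by
    have : ζ⁻¹ • ((1 - ζ⁻¹) • A) + ζ • ((1 - ζ) • C)
        = (ζ⁻¹ • A + B + ζ • C) - (ζ⁻¹ • (ζ⁻¹ • A) + B + ζ • (ζ • C)) := by module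
    rw [this, h2, h3, sub_zero]
  have hsub1 : (1 : ℂ) - ζ ≠ 0 := sub_ne_zero.mpr (fun h => hζ1 h.symm)
  have hsubinv : (1 : ℂ) - ζ⁻¹ ≠ 0 := by
    rw [sub_ne_zero]
    intro h
    exact hζ1 (by rw [← inv_inv ζ, ← h, inv_one])
  have hdiff : ζ - ζ⁻¹ ≠ 0 := by
    rw [sub_ne_zero]
    intro h
    apply hζ2
    field_simp at h
    rw [← h]
  have hCzero : C = 0 := by
    have key : (ζ - ζ⁻¹) • ((1 - ζ) • C)
        = (ζ⁻¹ • ((1 - ζ⁻¹) • A) + ζ • ((1 - ζ) • C))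
          - ζ⁻¹ • ((1 - ζ⁻¹) • A + (1 - ζ) • C) := by module
    rw [hX, hY, smul_zero, zero_sub, neg_zero] at key
    rcases smul_eq_zero.mp key with h | h
    · exact absurd h hdiff
    · rcases smul_eq_zero.mp h with h' | h'
      · exact absurd h' hsub1
      · exact h'
  have hAzero : A = 0 := by
    have h0 : (1 - ζ⁻¹) • A = 0 := by
      have := hX
      rw [hCzero, smul_zero, add_zero] at this
      exact this
    rcases smul_eq_zero.mp h0 with h | h
    · exact absurd h hsubinv
    · exact h
  have hBzero : B = 0 := by
    have := h1
    rw [hAzero, hCzero, zero_add, add_zero] at this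
    exact this
  -- translate into derivative identities
  have hA' : wzbar αm1 p = (br (αm1 p)) (α0'' p) := by
    have := hAzero; rw [hAdef, sub_eq_zero] at this; exact this
  have hB' : wzbar α0' p - wz α0'' p - (br (αm1 p)) (α1 p) - (br (α0' p)) (α0'' p) = 0 := by
    rw [← hBdef]; exact hBzero
  have hC' : -wz α1 p - (br (α0' p)) (α1 p) = 0 := by
    rw [← hCdef]; exact hCzero
  -- now prove the λ-version
  rw [wzbar_add' (F := fun q => lam⁻¹ • αm1 q) (dm1.const_smul lam⁻¹) d0',
    wz_add' (G := fun q => lam • α1 q) d0'' (d1.const_smul lam),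
    wzbar_smul' lam⁻¹ dm1, wz_smul' lam d1]
  have hC2 : wz α1 p = -((br (α0' p)) (α1 p)) := by
    linear_combination (norm := module) (-1 : ℂ) • hC'
  have hB2 : wzbar α0' p = wz α0'' p + (br (αm1 p)) (α1 p) + (br (α0' p)) (α0'' p) := by
    linear_combination (norm := module) hB'
  rw [hA', hB2, hC2]
  simp only [map_add, map_smul, LinearMap.add_apply, LinearMap.smul_apply]
  match_scalars <;> field_simp <;> ring
end
end

section
/- Let D ⊆ ℂ be open, let ω : D → ℝ, a, b : D → (0, ∞) be smooth with a + b = 2, and let ρ, φ, ψ : D → ℂ be smooth. Define the matrix-valued maps Ũ with rows (a_z/a + ω_z + ρ + φ/a, −conj(φ)/a, 1), (b⁻¹ e^{−ω} ψ, ρ + φ/b, 0), (0, −b e^{ω}, ρ) and Ṽ with rows (−conj(ρ) − conj(φ)/a, −a⁻¹ e^{−ω} conj(ψ), 0), (φ/b, b_z̄/b + ω_z̄ − conj(ρ) − conj(φ)/b, 1), (−a e^{ω}, 0, −conj(ρ)). Then the integrability condition Ũ_z̄ − Ṽ_z = [Ũ, Ṽ] holds on D if and only if the following four scalar equations hold on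 D: (i) ρ_z̄ + (conj ρ)_z = (a−b) e^{ω}; (ii) (log a)_{z z̄} + ω_{z z̄} = (b−2a) e^{ω} − (φ/a)_z̄ − (conj(φ)/a)_z − |φ|²/(ab) + e^{−2ω} |ψ|²/(ab); (iii) ψ_z̄ + (a⁻¹ − b⁻¹) conj(φ) ψ + (a⁻¹ − b⁻¹) e^{ω} φ² = e^{ω}(φ_z − ω_z φ) − e^{ω} φ (log(ab))_z; (iv) (log b)_{z z̄} + ω_{z z̄} = (a−2b) e^{ω} + (φ/b)_z̄ + (conj(φ)/b)_z − |φ|²/(ab) + e^{−2ω} |ψ|²/(ab). -/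
open Complex Matrix

noncomputable section

section Calc
variable {f g : ℂ → ℂ} {u v : ℂ → ℝ} {p : ℂ}

lemma wz_eq (F : ℂ → ℂ) (p : ℂ) :
    wz F p = (2:ℂ)⁻¹ * (fderiv ℝ F p 1 - Complex.I * fderiv ℝ F p Complex.I) := by
  simp [wz, smul_eq_mul]

lemma wzbar_eq (F : ℂ → ℂ) (p : ℂ) :
    wzbar F p = (2:ℂ)⁻¹ * (fderiv ℝ F p 1 + Complex.I * fderiv ℝ F p Complex.I) := by
  simp [wzbar, smul_eq_mul]

lemma wz_congr (h : f =ᶠ[nhds p] g) : wz f p = wz g p := by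
  simp [wz_eq, h.fderiv_eq]

lemma wzbar_congr (h : f =ᶠ[nhds p] g) : wzbar f p = wzbar g p := by
  simp [wzbar_eq, h.fderiv_eq]

lemma wz_const (c : ℂ) (p : ℂ) : wz (fun _ => c) p = 0 := by
  simp [wz_eq]

lemma wzbar_const (c : ℂ) (p : ℂ) : wzbar (fun _ => c) p = 0 := by
  simp [wzbar_eq]

lemma wz_add (hf : DifferentiableAt ℝ f p) (hg : DifferentiableAt ℝ g p) :
    wz (fun q => f q + g q) p = wz f p + wz g p := by
  simp only [wz_eq, fderiv_fun_add hf hg, ContinuousLinearMap.add_apply]; ring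

lemma wzbar_add (hf : DifferentiableAt ℝ f p) (hg : DifferentiableAt ℝ g p) :
    wzbar (fun q => f q + g q) p = wzbar f p + wzbar g p := by
  simp only [wzbar_eq, fderiv_fun_add hf hg, ContinuousLinearMap.add_apply]; ring

lemma wz_neg : wz (fun q => -f q) p = - wz f p := by
  simp only [wz_eq, fderiv_fun_neg, ContinuousLinearMap.neg_apply]; ring

lemma wzbar_neg : wzbar (fun q => -f q) p = - wzbar f p := by
  simp only [wzbar_eq, fderiv_fun_neg, ContinuousLinearMap.neg_apply]; ring

lemma wz_sub (hf : DifferentiableAt ℝ f p) (hg : DifferentiableAt ℝ g p) :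
    wz (fun q => f q - g q) p = wz f p - wz g p := by
  simp only [sub_eq_add_neg]
  rw [wz_add (g := fun q => -g q) hf hg.neg]
  simp [wz_neg, sub_eq_add_neg]

lemma wz_mul (hf : DifferentiableAt ℝ f p) (hg : DifferentiableAt ℝ g p) :
    wz (fun q => f q * g q) p = wz f p * g p + f p * wz g p := by
  simp only [wz_eq, fderiv_fun_mul hf hg, ContinuousLinearMap.add_apply,
    ContinuousLinearMap.smul_apply, smul_eq_mul]; ring

lemma wzbar_mul (hf : DifferentiableAt ℝ f p) (hg : DifferentiableAt ℝ g p) :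
    wzbar (fun q => f q * g q) p = wzbar f p * g p + f p * wzbar g p := by
  simp only [wzbar_eq, fderiv_fun_mul hf hg, ContinuousLinearMap.add_apply,
    ContinuousLinearMap.smul_apply, smul_eq_mul]; ring

lemma wz_comp {h : ℂ → ℂ} {h' : ℂ} (hh : HasDerivAt h h' (f p))
    (hf : DifferentiableAt ℝ f p) :
    wz (fun q => h (f q)) p = h' * wz f p := by
  have := (hh.comp_hasFDerivAt p hf.hasFDerivAt).fderiv
  simp only [Function.comp_def] at this
  simp only [wz_eq, this, ContinuousLinearMap.smul_apply, smul_eq_mul]; ring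

lemma wzbar_comp {h : ℂ → ℂ} {h' : ℂ} (hh : HasDerivAt h h' (f p))
    (hf : DifferentiableAt ℝ f p) :
    wzbar (fun q => h (f q)) p = h' * wzbar f p := by
  have := (hh.comp_hasFDerivAt p hf.hasFDerivAt).fderiv
  simp only [Function.comp_def] at this
  simp only [wzbar_eq, this, ContinuousLinearMap.smul_apply, smul_eq_mul]; ring

lemma wz_inv (hf : DifferentiableAt ℝ f p) (h0 : f p ≠ 0) :
    wz (fun q => (f q)⁻¹) p = -((f p)^2)⁻¹ * wz f p :=
  wz_comp (hasDerivAt_inv h0) hf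

lemma wzbar_inv (hf : DifferentiableAt ℝ f p) (h0 : f p ≠ 0) :
    wzbar (fun q => (f q)⁻¹) p = -((f p)^2)⁻¹ * wzbar f p :=
  wzbar_comp (hasDerivAt_inv h0) hf

lemma wz_conj (hf : DifferentiableAt ℝ f p) :
    wz (fun q => starRingEnd ℂ (f q)) p = starRingEnd ℂ (wzbar f p) := by
  have h : HasFDerivAt (fun q => starRingEnd ℂ (f q))
      ((Complex.conjCLE.toContinuousLinearMap).comp (fderiv ℝ f p)) p := by
    exact (Complex.conjCLE.toContinuousLinearMap.hasFDerivAt).comp p hf.hasFDerivAt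
  simp only [wz_eq, wzbar_eq, h.fderiv, ContinuousLinearMap.coe_comp', Function.comp_apply,
    ContinuousLinearEquiv.coe_coe, Complex.conjCLE_apply, map_add, _root_.map_mul, map_sub,
    map_inv₀, Complex.conj_I, map_ofNat]
  ring

lemma wzbar_conj (hf : DifferentiableAt ℝ f p) :
    wzbar (fun q => starRingEnd ℂ (f q)) p = starRingEnd ℂ (wz f p) := by
  have h : HasFDerivAt (fun q => starRingEnd ℂ (f q))
      ((Complex.conjCLE.toContinuousLinearMap).comp (fderiv ℝ f p)) p := by
    exact (Complex.conjCLE.toContinuousLinearMap.hasFDerivAt).comp p hf.hasFDerivAt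
  simp only [wz_eq, wzbar_eq, h.fderiv, ContinuousLinearMap.coe_comp', Function.comp_apply,
    ContinuousLinearEquiv.coe_coe, Complex.conjCLE_apply, map_add, _root_.map_mul, map_sub,
    map_inv₀, Complex.conj_I, map_ofNat]
  ring

/-- fderiv of a coerced real function -/
lemma ofReal_hasFDerivAt (hu : DifferentiableAt ℝ u p) :
    HasFDerivAt (fun q => ((u q : ℝ) : ℂ)) (Complex.ofRealCLM.comp (fderiv ℝ u p)) p :=
  Complex.ofRealCLM.hasFDerivAt.comp p hu.hasFDerivAt

lemma wzbar_ofReal_conj (hu : DifferentiableAt ℝ u p) :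
    wzbar (fun q => (u q : ℂ)) p = starRingEnd ℂ (wz (fun q => (u q : ℂ)) p) := by
  have h := (ofReal_hasFDerivAt hu).fderiv
  simp only [wz_eq, wzbar_eq, h, ContinuousLinearMap.coe_comp', Function.comp_apply,
    Complex.ofRealCLM_apply, map_sub, map_add, _root_.map_mul, map_inv₀, Complex.conj_ofReal,
    Complex.conj_I, map_ofNat]
  ring

lemma wz_ofReal_comp {g : ℝ → ℝ} {g' : ℝ} (hg : HasDerivAt g g' (u p))
    (hu : DifferentiableAt ℝ u p) :
    wz (fun q => ((g (u q) : ℝ) : ℂ)) p = (g' : ℂ) * wz (fun q => (u q : ℂ)) p := by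
  have h1 : HasFDerivAt (fun q => g (u q)) (g' • fderiv ℝ u p) p :=
    hg.comp_hasFDerivAt p hu.hasFDerivAt
  have h2 : HasFDerivAt (fun q => ((g (u q) : ℝ) : ℂ))
      (Complex.ofRealCLM.comp (g' • fderiv ℝ u p)) p :=
    Complex.ofRealCLM.hasFDerivAt.comp p h1
  have h3 := (ofReal_hasFDerivAt hu).fderiv
  simp only [wz_eq, h2.fderiv, h3, ContinuousLinearMap.coe_comp', Function.comp_apply,
    Complex.ofRealCLM_apply, ContinuousLinearMap.coe_smul', Pi.smul_apply, smul_eq_mul,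
    Complex.ofReal_mul]
  ring

lemma wzbar_ofReal_comp {g : ℝ → ℝ} {g' : ℝ} (hg : HasDerivAt g g' (u p))
    (hu : DifferentiableAt ℝ u p) :
    wzbar (fun q => ((g (u q) : ℝ) : ℂ)) p = (g' : ℂ) * wzbar (fun q => (u q : ℂ)) p := by
  have h1 : HasFDerivAt (fun q => g (u q)) (g' • fderiv ℝ u p) p :=
    hg.comp_hasFDerivAt p hu.hasFDerivAt
  have h2 : HasFDerivAt (fun q => ((g (u q) : ℝ) : ℂ))
      (Complex.ofRealCLM.comp (g' • fderiv ℝ u p)) p :=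
    Complex.ofRealCLM.hasFDerivAt.comp p h1
  have h3 := (ofReal_hasFDerivAt hu).fderiv
  simp only [wzbar_eq, h2.fderiv, h3, ContinuousLinearMap.coe_comp', Function.comp_apply,
    Complex.ofRealCLM_apply, ContinuousLinearMap.coe_smul', Pi.smul_apply, smul_eq_mul,
    Complex.ofReal_mul]
  ring

lemma wz_ofReal_exp (hu : DifferentiableAt ℝ u p) :
    wz (fun q => ((Real.exp (u q) : ℝ) : ℂ)) p
      = (Real.exp (u p) : ℂ) * wz (fun q => (u q : ℂ)) p :=
  wz_ofReal_comp (Real.hasDerivAt_exp (u p)) hu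

lemma wzbar_ofReal_exp (hu : DifferentiableAt ℝ u p) :
    wzbar (fun q => ((Real.exp (u q) : ℝ) : ℂ)) p
      = (Real.exp (u p) : ℂ) * wzbar (fun q => (u q : ℂ)) p :=
  wzbar_ofReal_comp (Real.hasDerivAt_exp (u p)) hu

lemma wz_ofReal_log (hu : DifferentiableAt ℝ u p) (h0 : u p ≠ 0) :
    wz (fun q => ((Real.log (u q) : ℝ) : ℂ)) p
      = ((u p : ℂ))⁻¹ * wz (fun q => (u q : ℂ)) p := by
  have := wz_ofReal_comp (Real.hasDerivAt_log h0) hu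
  rwa [Complex.ofReal_inv] at this

lemma wzbar_ofReal_log (hu : DifferentiableAt ℝ u p) (h0 : u p ≠ 0) :
    wzbar (fun q => ((Real.log (u q) : ℝ) : ℂ)) p
      = ((u p : ℂ))⁻¹ * wzbar (fun q => (u q : ℂ)) p := by
  have := wzbar_ofReal_comp (Real.hasDerivAt_log h0) hu
  rwa [Complex.ofReal_inv] at this

end Calc

section Second
variable {F : ℂ → ℂ} {p : ℂ}

lemma hasFDerivAt_fderiv_apply (hF : DifferentiableAt ℝ (fderiv ℝ F) p) (v : ℂ) :
    HasFDerivAt (fun q => fderiv ℝ F q v)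
      ((ContinuousLinearMap.apply ℝ ℂ v).comp (fderiv ℝ (fderiv ℝ F) p)) p :=
  ((ContinuousLinearMap.apply ℝ ℂ v).hasFDerivAt).comp p hF.hasFDerivAt

lemma differentiableAt_wz (hF : DifferentiableAt ℝ (fderiv ℝ F) p) :
    DifferentiableAt ℝ (fun q => wz F q) p := by
  have : (fun q => wz F q)
      = fun q => (2:ℂ)⁻¹ • (fderiv ℝ F q 1 - Complex.I • fderiv ℝ F q Complex.I) := rfl
  rw [this]
  exact (((hasFDerivAt_fderiv_apply hF 1).differentiableAt.sub
    ((hasFDerivAt_fderiv_apply hF Complex.I).differentiableAt.const_smul Complex.I)).const_smul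
      ((2:ℂ)⁻¹))

lemma differentiableAt_wzbar (hF : DifferentiableAt ℝ (fderiv ℝ F) p) :
    DifferentiableAt ℝ (fun q => wzbar F q) p := by
  have : (fun q => wzbar F q)
      = fun q => (2:ℂ)⁻¹ • (fderiv ℝ F q 1 + Complex.I • fderiv ℝ F q Complex.I) := rfl
  rw [this]
  exact (((hasFDerivAt_fderiv_apply hF 1).differentiableAt.add
    ((hasFDerivAt_fderiv_apply hF Complex.I).differentiableAt.const_smul Complex.I)).const_smul
      ((2:ℂ)⁻¹))

lemma wz_wzbar_comm (hF : ContDiffAt ℝ 2 F p) :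
    wz (fun q => wzbar F q) p = wzbar (fun q => wz F q) p := by
  have hF' : DifferentiableAt ℝ (fderiv ℝ F) p :=
    (hF.fderiv_right (show (1:WithTop ℕ∞) + 1 ≤ 2 by norm_num)).differentiableAt one_ne_zero
  have h1 := hasFDerivAt_fderiv_apply hF' 1
  have hI := hasFDerivAt_fderiv_apply hF' Complex.I
  have hsymm := hF.isSymmSndFDerivAt (by simp)
  have e1 : (fun q => wzbar F q)
      = fun q => (2:ℂ)⁻¹ • (fderiv ℝ F q 1 + Complex.I • fderiv ℝ F q Complex.I) := rfl
  have e2 : (fun q => wz F q)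
      = fun q => (2:ℂ)⁻¹ • (fderiv ℝ F q 1 - Complex.I • fderiv ℝ F q Complex.I) := rfl
  have hzb : HasFDerivAt (fun q => wzbar F q)
      ((2:ℂ)⁻¹ • (((ContinuousLinearMap.apply ℝ ℂ (1:ℂ)).comp (fderiv ℝ (fderiv ℝ F) p)) +
        Complex.I • ((ContinuousLinearMap.apply ℝ ℂ Complex.I).comp
          (fderiv ℝ (fderiv ℝ F) p)))) p := by
    rw [e1]; exact ((h1.add (hI.const_smul Complex.I)).const_smul ((2:ℂ)⁻¹))
  have hz : HasFDerivAt (fun q => wz F q)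
      ((2:ℂ)⁻¹ • (((ContinuousLinearMap.apply ℝ ℂ (1:ℂ)).comp (fderiv ℝ (fderiv ℝ F) p)) -
        Complex.I • ((ContinuousLinearMap.apply ℝ ℂ Complex.I).comp
          (fderiv ℝ (fderiv ℝ F) p)))) p := by
    rw [e2]; exact ((h1.sub (hI.const_smul Complex.I)).const_smul ((2:ℂ)⁻¹))
  rw [wz_eq, wzbar_eq, hzb.fderiv, hz.fderiv]
  simp only [ContinuousLinearMap.smul_apply, ContinuousLinearMap.add_apply,
    ContinuousLinearMap.sub_apply, ContinuousLinearMap.coe_comp', Function.comp_apply,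
    ContinuousLinearMap.apply_apply, smul_eq_mul]
  linear_combination (Complex.I / 2) * (hsymm 1 Complex.I)

end Second

section Helpers
variable {u : ℂ → ℝ} {f : ℂ → ℂ} {q : ℂ}

lemma diffAt_ofReal (hu : DifferentiableAt ℝ u q) :
    DifferentiableAt ℝ (fun r => ((u r : ℝ) : ℂ)) q :=
  Complex.ofRealCLM.differentiableAt.comp q hu

lemma diffAt_conj (hf : DifferentiableAt ℝ f q) :
    DifferentiableAt ℝ (fun r => (starRingEnd ℂ) (f r)) q :=
  (Complex.conjCLE.toContinuousLinearMap.differentiableAt).comp q hf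

lemma contDiffAt_ofReal {n : WithTop ℕ∞} (hu : ContDiffAt ℝ n u q) :
    ContDiffAt ℝ n (fun r => ((u r : ℝ) : ℂ)) q :=
  Complex.ofRealCLM.contDiff.contDiffAt.comp q hu

end Helpers

/-- The matrix Ũ. -/
def Ut (ω a b : ℂ → ℝ) (ρ φ ψ : ℂ → ℂ) (p : ℂ) : M3 :=
  !![wz (fun q => (a q : ℂ)) p / (a p : ℂ) + wz (fun q => (ω q : ℂ)) p + ρ p + φ p / (a p : ℂ),
       -(starRingEnd ℂ (φ p)) / (a p : ℂ), 1;
     ((b p : ℂ))⁻¹ * (Real.exp (-(ω p)) : ℂ) * ψ p, ρ p + φ p / (b p : ℂ), 0;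
     0, -(b p : ℂ) * (Real.exp (ω p) : ℂ), ρ p]

/-- The matrix Ṽ. -/
def Vt (ω a b : ℂ → ℝ) (ρ φ ψ : ℂ → ℂ) (p : ℂ) : M3 :=
  !![-(starRingEnd ℂ (ρ p)) - starRingEnd ℂ (φ p) / (a p : ℂ),
       -((a p : ℂ))⁻¹ * (Real.exp (-(ω p)) : ℂ) * starRingEnd ℂ (ψ p), 0;
     φ p / (b p : ℂ),
       wzbar (fun q => (b q : ℂ)) p / (b p : ℂ) + wzbar (fun q => (ω q : ℂ)) p
         - starRingEnd ℂ (ρ p) - starRingEnd ℂ (φ p) / (b p : ℂ), 1;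
     -(a p : ℂ) * (Real.exp (ω p) : ℂ), 0, -(starRingEnd ℂ (ρ p))]

/-- The integrability condition Ũ_z̄ − Ṽ_z = [Ũ, Ṽ] holds on D if and only if the four
scalar compatibility equations hold on D. -/
theorem statement15 (D : Set ℂ) (hD : IsOpen D)
    (ω a b : ℂ → ℝ) (ρ φ ψ : ℂ → ℂ)
    (hω : ContDiffOn ℝ (⊤ : ℕ∞) ω D) (ha : ContDiffOn ℝ (⊤ : ℕ∞) a D) (hb : ContDiffOn ℝ (⊤ : ℕ∞) b D)
    (hρ : ContDiffOn ℝ (⊤ : ℕ∞) ρ D) (hφ : ContDiffOn ℝ (⊤ : ℕ∞) φ D) (hψ : ContDiffOn ℝ (⊤ : ℕ∞) ψ D)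
    (hapos : ∀ p ∈ D, 0 < a p) (hbpos : ∀ p ∈ D, 0 < b p)
    (hab : ∀ p ∈ D, a p + b p = 2) :
    (∀ p ∈ D,
      (Matrix.of fun i j => wzbar (fun q => Ut ω a b ρ φ ψ q i j) p)
        - (Matrix.of fun i j => wz (fun q => Vt ω a b ρ φ ψ q i j) p)
      = Ut ω a b ρ φ ψ p * Vt ω a b ρ φ ψ p - Vt ω a b ρ φ ψ p * Ut ω a b ρ φ ψ p)
    ↔
    (∀ p ∈ D,
      -- (i)
      wzbar ρ p + wz (fun q => starRingEnd ℂ (ρ q)) p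
        = ((a p : ℂ) - (b p : ℂ)) * (Real.exp (ω p) : ℂ) ∧
      -- (ii)
      wzbar (fun q => wz (fun r => (Real.log (a r) : ℂ)) q) p
          + wzbar (fun q => wz (fun r => (ω r : ℂ)) q) p
        = ((b p : ℂ) - 2 * (a p : ℂ)) * (Real.exp (ω p) : ℂ)
            - wzbar (fun q => φ q / (a q : ℂ)) p
            - wz (fun q => starRingEnd ℂ (φ q) / (a q : ℂ)) p
            - (Complex.normSq (φ p) : ℂ) / ((a p : ℂ) * (b p : ℂ))
            + (Real.exp (-2 * ω p) : ℂ) * (Complex.normSq (ψ p) : ℂ)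
                / ((a p : ℂ) * (b p : ℂ)) ∧
      -- (iii)
      wzbar ψ p + (((a p : ℂ))⁻¹ - ((b p : ℂ))⁻¹) * starRingEnd ℂ (φ p) * ψ p
          + (((a p : ℂ))⁻¹ - ((b p : ℂ))⁻¹) * (Real.exp (ω p) : ℂ) * (φ p) ^ 2
        = (Real.exp (ω p) : ℂ) * (wz φ p - wz (fun q => (ω q : ℂ)) p * φ p)
            - (Real.exp (ω p) : ℂ) * φ p * wz (fun q => (Real.log (a q * b q) : ℂ)) p ∧
      -- (iv)
      wzbar (fun q => wz (fun r => (Real.log (b r) : ℂ)) q) p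
          + wzbar (fun q => wz (fun r => (ω r : ℂ)) q) p
        = ((a p : ℂ) - 2 * (b p : ℂ)) * (Real.exp (ω p) : ℂ)
            + wzbar (fun q => φ q / (b q : ℂ)) p
            + wz (fun q => starRingEnd ℂ (φ q) / (b q : ℂ)) p
            - (Complex.normSq (φ p) : ℂ) / ((a p : ℂ) * (b p : ℂ))
            + (Real.exp (-2 * ω p) : ℂ) * (Complex.normSq (ψ p) : ℂ)
                / ((a p : ℂ) * (b p : ℂ))) := by
  refine forall₂_congr fun p hp => ?_
  have hDn : D ∈ nhds p := hD.mem_nhds hp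
  have hda : DifferentiableAt ℝ a p := (ha.contDiffAt hDn).differentiableAt (by simp)
  have hdb : DifferentiableAt ℝ b p := (hb.contDiffAt hDn).differentiableAt (by simp)
  have hdω : DifferentiableAt ℝ ω p := (hω.contDiffAt hDn).differentiableAt (by simp)
  have hdρ : DifferentiableAt ℝ ρ p := (hρ.contDiffAt hDn).differentiableAt (by simp)
  have hdφ : DifferentiableAt ℝ φ p := (hφ.contDiffAt hDn).differentiableAt (by simp)
  have hdψ : DifferentiableAt ℝ ψ p := (hψ.contDiffAt hDn).differentiableAt (by simp)
  have hdA : DifferentiableAt ℝ (fun r => ((a r : ℝ) : ℂ)) p := diffAt_ofReal hda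
  have hdB : DifferentiableAt ℝ (fun r => ((b r : ℝ) : ℂ)) p := diffAt_ofReal hdb
  have hdW : DifferentiableAt ℝ (fun r => ((ω r : ℝ) : ℂ)) p := diffAt_ofReal hdω
  have ha0 : ((a p : ℝ) : ℂ) ≠ 0 := by exact_mod_cast (hapos p hp).ne'
  have hb0 : ((b p : ℝ) : ℂ) ≠ 0 := by exact_mod_cast (hbpos p hp).ne'
  have hEW0 : ((Real.exp (ω p) : ℝ) : ℂ) ≠ 0 := by exact_mod_cast (Real.exp_pos (ω p)).ne'
  have hdexp : DifferentiableAt ℝ (fun r => ((Real.exp (ω r) : ℝ) : ℂ)) p :=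
    diffAt_ofReal ((Real.differentiable_exp.differentiableAt).comp p hdω)
  have hdexpm : DifferentiableAt ℝ (fun r => ((Real.exp (-(ω r)) : ℝ) : ℂ)) p :=
    diffAt_ofReal ((Real.differentiable_exp.differentiableAt).comp p hdω.neg)
  have hCA : ContDiffOn ℝ (⊤ : ℕ∞) (fun r => ((a r : ℝ) : ℂ)) D :=
    Complex.ofRealCLM.contDiff.comp_contDiffOn ha
  have hCB : ContDiffOn ℝ (⊤ : ℕ∞) (fun r => ((b r : ℝ) : ℂ)) D :=
    Complex.ofRealCLM.contDiff.comp_contDiffOn hb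
  have hCW : ContDiffOn ℝ (⊤ : ℕ∞) (fun r => ((ω r : ℝ) : ℂ)) D :=
    Complex.ofRealCLM.contDiff.comp_contDiffOn hω
  have hfdA : DifferentiableAt ℝ (fderiv ℝ (fun r => ((a r : ℝ) : ℂ))) p :=
    (((hCA.fderiv_of_isOpen hD (WithTop.coe_le_coe.mpr le_top)).differentiableOn one_ne_zero).differentiableAt hDn :)
  have hfdB : DifferentiableAt ℝ (fderiv ℝ (fun r => ((b r : ℝ) : ℂ))) p :=
    (((hCB.fderiv_of_isOpen hD (WithTop.coe_le_coe.mpr le_top)).differentiableOn one_ne_zero).differentiableAt hDn :)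
  have hfdW : DifferentiableAt ℝ (fderiv ℝ (fun r => ((ω r : ℝ) : ℂ))) p :=
    (((hCW.fderiv_of_isOpen hD (WithTop.coe_le_coe.mpr le_top)).differentiableOn one_ne_zero).differentiableAt hDn :)
  have hXa : wzbar (fun q => wz (fun r => ((a r : ℝ) : ℂ)) q / ((a q : ℝ) : ℂ)) p
      = wzbar (fun q => wz (fun r => ((Real.log (a r) : ℝ) : ℂ)) q) p := by
    refine (wzbar_congr ?_).symm
    filter_upwards [hDn] with q hq
    rw [wz_ofReal_log ((ha.contDiffAt (hD.mem_nhds hq)).differentiableAt (by simp))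
      (hapos q hq).ne', div_eq_inv_mul]
  have hXb : wz (fun q => wzbar (fun r => ((b r : ℝ) : ℂ)) q / ((b q : ℝ) : ℂ)) p
      = wzbar (fun q => wz (fun r => ((Real.log (b r) : ℝ) : ℂ)) q) p := by
    have h1 : wz (fun q => wzbar (fun r => ((b r : ℝ) : ℂ)) q / ((b q : ℝ) : ℂ)) p
        = wz (fun q => wzbar (fun r => ((Real.log (b r) : ℝ) : ℂ)) q) p := by
      refine (wz_congr ?_).symm
      filter_upwards [hDn] with q hq
      rw [wzbar_ofReal_log ((hb.contDiffAt (hD.mem_nhds hq)).differentiableAt (by simp))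
        (hbpos q hq).ne', div_eq_inv_mul]
    rw [h1, wz_wzbar_comm]
    exact (contDiffAt_ofReal ((hb.contDiffAt hDn).log (hbpos p hp).ne')).of_le (WithTop.coe_le_coe.mpr (le_top : (2:ℕ∞) ≤ ⊤))
  have hXw : wz (fun q => wzbar (fun r => ((ω r : ℝ) : ℂ)) q) p
      = wzbar (fun q => wz (fun r => ((ω r : ℝ) : ℂ)) q) p :=
    wz_wzbar_comm ((contDiffAt_ofReal (hω.contDiffAt hDn)).of_le (WithTop.coe_le_coe.mpr (le_top : (2:ℕ∞) ≤ ⊤)))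
  have hLab : wz (fun r => ((Real.log (a r * b r) : ℝ) : ℂ)) p
      = ((a p : ℝ) : ℂ)⁻¹ * wz (fun r => ((a r : ℝ) : ℂ)) p
        + ((b p : ℝ) : ℂ)⁻¹ * wz (fun r => ((b r : ℝ) : ℂ)) p := by
    have h1 : (fun r => ((Real.log (a r * b r) : ℝ) : ℂ))
        =ᶠ[nhds p] fun r => ((Real.log (a r) : ℝ) : ℂ) + ((Real.log (b r) : ℝ) : ℂ) := by
      filter_upwards [hDn] with q hq
      rw [Real.log_mul (hapos q hq).ne' (hbpos q hq).ne']
      push_cast; ring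
    have d1 : DifferentiableAt ℝ (fun r => ((Real.log (a r) : ℝ) : ℂ)) p :=
      diffAt_ofReal (((ha.contDiffAt hDn).log (hapos p hp).ne').differentiableAt (by simp))
    have d2 : DifferentiableAt ℝ (fun r => ((Real.log (b r) : ℝ) : ℂ)) p :=
      diffAt_ofReal (((hb.contDiffAt hDn).log (hbpos p hp).ne').differentiableAt (by simp))
    rw [wz_congr h1, wz_add d1 d2, wz_ofReal_log hda (hapos p hp).ne',
      wz_ofReal_log hdb (hbpos p hp).ne']
  have hneg : (fun q => (((-(ω q)) : ℝ) : ℂ)) = fun q => -(((ω q) : ℝ) : ℂ) := by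
    funext q; push_cast; ring
  have hEm : wz (fun q => ((Real.exp (-(ω q)) : ℝ) : ℂ)) p
      = -(((Real.exp (-(ω p)) : ℝ) : ℂ) * wz (fun r => ((ω r : ℝ) : ℂ)) p) :=
    calc wz (fun q => ((Real.exp (-(ω q)) : ℝ) : ℂ)) p
        = ((Real.exp (-(ω p)) : ℝ) : ℂ) * wz (fun q => (((-(ω q)) : ℝ) : ℂ)) p :=
          wz_ofReal_comp (Real.hasDerivAt_exp (-(ω p))) hdω.neg
      _ = -(((Real.exp (-(ω p)) : ℝ) : ℂ) * wz (fun r => ((ω r : ℝ) : ℂ)) p) := by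
          rw [hneg, wz_neg]; ring
  have hEmbar : wzbar (fun q => ((Real.exp (-(ω q)) : ℝ) : ℂ)) p
      = -(((Real.exp (-(ω p)) : ℝ) : ℂ) * wzbar (fun r => ((ω r : ℝ) : ℂ)) p) :=
    calc wzbar (fun q => ((Real.exp (-(ω q)) : ℝ) : ℂ)) p
        = ((Real.exp (-(ω p)) : ℝ) : ℂ) * wzbar (fun q => (((-(ω q)) : ℝ) : ℂ)) p :=
          wzbar_ofReal_comp (Real.hasDerivAt_exp (-(ω p))) hdω.neg
      _ = -(((Real.exp (-(ω p)) : ℝ) : ℂ) * wzbar (fun r => ((ω r : ℝ) : ℂ)) p) := by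
          rw [hneg, wzbar_neg]; ring
  -- entry computations
  have hU00 : wzbar (fun q => wz (fun r => ((a r : ℝ) : ℂ)) q / ((a q : ℝ) : ℂ)
        + wz (fun r => ((ω r : ℝ) : ℂ)) q + ρ q + φ q / ((a q : ℝ) : ℂ)) p
      = wzbar (fun q => wz (fun r => ((Real.log (a r) : ℝ) : ℂ)) q) p
        + wzbar (fun q => wz (fun r => ((ω r : ℝ) : ℂ)) q) p
        + wzbar ρ p + wzbar (fun q => φ q / ((a q : ℝ) : ℂ)) p := by
    have d1 : DifferentiableAt ℝ (fun q => wz (fun r => ((a r : ℝ) : ℂ)) q / ((a q : ℝ) : ℂ)) p := by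
      simp only [div_eq_mul_inv]
      exact (differentiableAt_wz hfdA).mul (hdA.inv ha0)
    have d2 : DifferentiableAt ℝ (fun q => wz (fun r => ((ω r : ℝ) : ℂ)) q) p :=
      differentiableAt_wz hfdW
    have d4 : DifferentiableAt ℝ (fun q => φ q / ((a q : ℝ) : ℂ)) p := by
      simp only [div_eq_mul_inv]
      exact hdφ.mul (hdA.inv ha0)
    rw [wzbar_add ((d1.fun_add d2).fun_add hdρ) d4, wzbar_add (d1.fun_add d2) hdρ, wzbar_add d1 d2, hXa]
  have hV00 : wz (fun q => -(starRingEnd ℂ) (ρ q) - (starRingEnd ℂ) (φ q) / ((a q : ℝ) : ℂ)) p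
      = -(wz (fun q => (starRingEnd ℂ) (ρ q)) p)
        - wz (fun q => (starRingEnd ℂ) (φ q) / ((a q : ℝ) : ℂ)) p := by
    have d4 : DifferentiableAt ℝ (fun q => (starRingEnd ℂ) (φ q) / ((a q : ℝ) : ℂ)) p := by
      simp only [div_eq_mul_inv]
      exact (diffAt_conj hdφ).mul (hdA.inv ha0)
    rw [wz_sub (diffAt_conj hdρ).fun_neg d4, wz_neg]
  have hU01 : wzbar (fun q => -(starRingEnd ℂ) (φ q) / ((a q : ℝ) : ℂ)) p
      = -((starRingEnd ℂ) (wz φ p)) * ((a p : ℝ) : ℂ)⁻¹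
        + (starRingEnd ℂ) (φ p) * ((a p : ℝ) : ℂ)⁻¹ * ((a p : ℝ) : ℂ)⁻¹
          * (starRingEnd ℂ) (wz (fun r => ((a r : ℝ) : ℂ)) p) := by
    have h1 : (fun q => -(starRingEnd ℂ) (φ q) / ((a q : ℝ) : ℂ))
        = fun q => -((starRingEnd ℂ) (φ q) * (((a q : ℝ) : ℂ))⁻¹) := by funext q; ring
    rw [h1, wzbar_neg, wzbar_mul (diffAt_conj hdφ) (hdA.fun_inv ha0), wzbar_inv hdA ha0,
      wzbar_conj hdφ, wzbar_ofReal_conj hda]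
    ring
  have hV01 : wz (fun q => -((a q : ℝ) : ℂ)⁻¹ * ((Real.exp (-(ω q)) : ℝ) : ℂ)
        * (starRingEnd ℂ) (ψ q)) p
      = ((a p : ℝ) : ℂ)⁻¹ * ((a p : ℝ) : ℂ)⁻¹ * wz (fun r => ((a r : ℝ) : ℂ)) p
          * ((Real.exp (-(ω p)) : ℝ) : ℂ) * (starRingEnd ℂ) (ψ p)
        + ((a p : ℝ) : ℂ)⁻¹ * ((Real.exp (-(ω p)) : ℝ) : ℂ)
          * wz (fun r => ((ω r : ℝ) : ℂ)) p * (starRingEnd ℂ) (ψ p)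
        - ((a p : ℝ) : ℂ)⁻¹ * ((Real.exp (-(ω p)) : ℝ) : ℂ)
          * (starRingEnd ℂ) (wzbar ψ p) := by
    have h1 : (fun q => -((a q : ℝ) : ℂ)⁻¹ * ((Real.exp (-(ω q)) : ℝ) : ℂ)
          * (starRingEnd ℂ) (ψ q))
        = fun q => -(((a q : ℝ) : ℂ)⁻¹ * ((Real.exp (-(ω q)) : ℝ) : ℂ)
          * (starRingEnd ℂ) (ψ q)) := by funext q; ring
    rw [h1, wz_neg, wz_mul ((hdA.fun_inv ha0).fun_mul hdexpm) (diffAt_conj hdψ),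
      wz_mul (hdA.fun_inv ha0) hdexpm, wz_inv hdA ha0, hEm, wz_conj hdψ]
    ring
  have hU10 : wzbar (fun q => ((b q : ℝ) : ℂ)⁻¹ * ((Real.exp (-(ω q)) : ℝ) : ℂ) * ψ q) p
      = -(((b p : ℝ) : ℂ)⁻¹ * ((b p : ℝ) : ℂ)⁻¹
            * (starRingEnd ℂ) (wz (fun r => ((b r : ℝ) : ℂ)) p)
            * ((Real.exp (-(ω p)) : ℝ) : ℂ) * ψ p)
        - ((b p : ℝ) : ℂ)⁻¹ * ((Real.exp (-(ω p)) : ℝ) : ℂ)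
          * (starRingEnd ℂ) (wz (fun r => ((ω r : ℝ) : ℂ)) p) * ψ p
        + ((b p : ℝ) : ℂ)⁻¹ * ((Real.exp (-(ω p)) : ℝ) : ℂ) * wzbar ψ p := by
    rw [wzbar_mul ((hdB.fun_inv hb0).fun_mul hdexpm) hdψ, wzbar_mul (hdB.fun_inv hb0) hdexpm,
      wzbar_inv hdB hb0, hEmbar, wzbar_ofReal_conj hdb, wzbar_ofReal_conj hdω]
    ring
  have hV10 : wz (fun q => φ q / ((b q : ℝ) : ℂ)) p
      = wz φ p * ((b p : ℝ) : ℂ)⁻¹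
        - φ p * (((b p : ℝ) : ℂ)⁻¹ * ((b p : ℝ) : ℂ)⁻¹) * wz (fun r => ((b r : ℝ) : ℂ)) p := by
    have h1 : (fun q => φ q / ((b q : ℝ) : ℂ)) = fun q => φ q * (((b q : ℝ) : ℂ))⁻¹ := by
      funext q; ring
    rw [h1, wz_mul hdφ (hdB.fun_inv hb0), wz_inv hdB hb0]
    ring
  have hU11 : wzbar (fun q => ρ q + φ q / ((b q : ℝ) : ℂ)) p
      = wzbar ρ p + wzbar (fun q => φ q / ((b q : ℝ) : ℂ)) p := by
    have d4 : DifferentiableAt ℝ (fun q => φ q / ((b q : ℝ) : ℂ)) p := by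
      simp only [div_eq_mul_inv]
      exact hdφ.mul (hdB.inv hb0)
    exact wzbar_add hdρ d4
  have hV11 : wz (fun q => wzbar (fun r => ((b r : ℝ) : ℂ)) q / ((b q : ℝ) : ℂ)
        + wzbar (fun r => ((ω r : ℝ) : ℂ)) q - (starRingEnd ℂ) (ρ q)
        - (starRingEnd ℂ) (φ q) / ((b q : ℝ) : ℂ)) p
      = wzbar (fun q => wz (fun r => ((Real.log (b r) : ℝ) : ℂ)) q) p
        + wzbar (fun q => wz (fun r => ((ω r : ℝ) : ℂ)) q) p
        - wz (fun q => (starRingEnd ℂ) (ρ q)) p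
        - wz (fun q => (starRingEnd ℂ) (φ q) / ((b q : ℝ) : ℂ)) p := by
    have d1 : DifferentiableAt ℝ
        (fun q => wzbar (fun r => ((b r : ℝ) : ℂ)) q / ((b q : ℝ) : ℂ)) p := by
      simp only [div_eq_mul_inv]
      exact (differentiableAt_wzbar hfdB).mul (hdB.inv hb0)
    have d2 : DifferentiableAt ℝ (fun q => wzbar (fun r => ((ω r : ℝ) : ℂ)) q) p :=
      differentiableAt_wzbar hfdW
    have d3 : DifferentiableAt ℝ (fun q => (starRingEnd ℂ) (ρ q)) p := diffAt_conj hdρ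
    have d4 : DifferentiableAt ℝ (fun q => (starRingEnd ℂ) (φ q) / ((b q : ℝ) : ℂ)) p := by
      simp only [div_eq_mul_inv]
      exact (diffAt_conj hdφ).mul (hdB.inv hb0)
    rw [wz_sub ((d1.fun_add d2).fun_sub d3) d4, wz_sub (d1.fun_add d2) d3, wz_add d1 d2, hXb, hXw]
  have hU21 : wzbar (fun q => -((b q : ℝ) : ℂ) * ((Real.exp (ω q) : ℝ) : ℂ)) p
      = -((starRingEnd ℂ) (wz (fun r => ((b r : ℝ) : ℂ)) p) * ((Real.exp (ω p) : ℝ) : ℂ))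
        - ((b p : ℝ) : ℂ) * (starRingEnd ℂ) (wz (fun r => ((ω r : ℝ) : ℂ)) p)
          * ((Real.exp (ω p) : ℝ) : ℂ) := by
    have h1 : (fun q => -((b q : ℝ) : ℂ) * ((Real.exp (ω q) : ℝ) : ℂ))
        = fun q => -(((b q : ℝ) : ℂ) * ((Real.exp (ω q) : ℝ) : ℂ)) := by funext q; ring
    rw [h1, wzbar_neg, wzbar_mul hdB hdexp, wzbar_ofReal_exp hdω, wzbar_ofReal_conj hdb,
      wzbar_ofReal_conj hdω]
    ring
  have hV20 : wz (fun q => -((a q : ℝ) : ℂ) * ((Real.exp (ω q) : ℝ) : ℂ)) p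
      = -(wz (fun r => ((a r : ℝ) : ℂ)) p * ((Real.exp (ω p) : ℝ) : ℂ))
        - ((a p : ℝ) : ℂ) * wz (fun r => ((ω r : ℝ) : ℂ)) p
          * ((Real.exp (ω p) : ℝ) : ℂ) := by
    have h1 : (fun q => -((a q : ℝ) : ℂ) * ((Real.exp (ω q) : ℝ) : ℂ))
        = fun q => -(((a q : ℝ) : ℂ) * ((Real.exp (ω q) : ℝ) : ℂ)) := by funext q; ring
    rw [h1, wz_neg, wz_mul hdA hdexp, wz_ofReal_exp hdω]
    ring
  have hV22 : wz (fun q => -(starRingEnd ℂ) (ρ q)) p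
      = -(wz (fun q => (starRingEnd ℂ) (ρ q)) p) := wz_neg
  -- value-level rewrites
  have hNphi : ((Complex.normSq (φ p) : ℝ) : ℂ) = φ p * (starRingEnd ℂ) (φ p) :=
    (Complex.mul_conj _).symm
  have hNpsi : ((Complex.normSq (ψ p) : ℝ) : ℂ) = ψ p * (starRingEnd ℂ) (ψ p) :=
    (Complex.mul_conj _).symm
  have hEmE : ((Real.exp (-(ω p)) : ℝ) : ℂ) = (((Real.exp (ω p) : ℝ) : ℂ))⁻¹ := by
    rw [Real.exp_neg]; push_cast; ring
  have hEm2 : ((Real.exp (-2 * ω p) : ℝ) : ℂ)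
      = (((Real.exp (ω p) : ℝ) : ℂ))⁻¹ * (((Real.exp (ω p) : ℝ) : ℂ))⁻¹ := by
    rw [show -2 * ω p = -(ω p) + -(ω p) by ring, Real.exp_add, Real.exp_neg]; push_cast; ring
  have hca : ((a p : ℝ) : ℂ) * (((a p : ℝ) : ℂ))⁻¹ = 1 := mul_inv_cancel₀ ha0
  have hcb : ((b p : ℝ) : ℂ) * (((b p : ℝ) : ℂ))⁻¹ = 1 := mul_inv_cancel₀ hb0
  have hcE : ((Real.exp (ω p) : ℝ) : ℂ) * (((Real.exp (ω p) : ℝ) : ℂ))⁻¹ = 1 :=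
    mul_inv_cancel₀ hEW0
  constructor
  · intro H
    have h00 := Matrix.ext_iff.mpr H 0 0
    have h10 := Matrix.ext_iff.mpr H 1 0
    have h11 := Matrix.ext_iff.mpr H 1 1
    have h22 := Matrix.ext_iff.mpr H 2 2
    simp only [Matrix.sub_apply, Matrix.of_apply, Matrix.mul_apply, Fin.sum_univ_three, Ut, Vt,
      Matrix.cons_val', Matrix.cons_val_zero, Matrix.cons_val_one, Matrix.head_cons,
      Matrix.empty_val', Matrix.cons_val_fin_one, Matrix.head_fin_const, Matrix.cons_val_two,
      Matrix.tail_cons, Fin.zero_eta, Fin.mk_one, Fin.reduceFinMk] at h00 h10 h11 h22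
    rw [hU00, hV00] at h00
    rw [hU10, hV10] at h10
    rw [hU11, hV11] at h11
    rw [hV22] at h22
    simp only [hEmE, wzbar_ofReal_conj hdb, wzbar_ofReal_conj hdω] at h00 h10 h11
    have E1 : wzbar ρ p + wz (fun q => starRingEnd ℂ (ρ q)) p
        = ((a p : ℂ) - (b p : ℂ)) * (Real.exp (ω p) : ℂ) := by linear_combination h22
    refine ⟨E1, ?_, ?_, ?_⟩
    · rw [hNphi, hNpsi, hEm2]
      linear_combination h00 - E1
    · rw [hLab]
      linear_combination ((b p : ℂ) * ((Real.exp (ω p) : ℝ) : ℂ)) * h10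
        + (-(((Real.exp (ω p) : ℝ) : ℂ) * wz (fun r => ((a r : ℝ) : ℂ)) p * φ p
              * ((a p : ℂ))⁻¹)
            - ((Real.exp (ω p) : ℝ) : ℂ) * wz (fun r => ((b r : ℝ) : ℂ)) p * φ p
              * ((b p : ℂ))⁻¹
            - ((Real.exp (ω p) : ℝ) : ℂ) * (starRingEnd ℂ) (φ p) * ((a p : ℂ))⁻¹
              * (((Real.exp (ω p) : ℝ) : ℂ))⁻¹ * ψ p
            + ((Real.exp (ω p) : ℝ) : ℂ) * (starRingEnd ℂ) (φ p) * ((b p : ℂ))⁻¹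
              * (((Real.exp (ω p) : ℝ) : ℂ))⁻¹ * ψ p
            - ((Real.exp (ω p) : ℝ) : ℂ) * φ p * wz (fun r => ((ω r : ℝ) : ℂ)) p
            - ((Real.exp (ω p) : ℝ) : ℂ) * φ p ^ 2 * ((a p : ℂ))⁻¹
            + ((Real.exp (ω p) : ℝ) : ℂ) * φ p ^ 2 * ((b p : ℂ))⁻¹
            + ((Real.exp (ω p) : ℝ) : ℂ) * wz φ p
            - ((Real.exp (ω p) : ℝ) : ℂ) * (((Real.exp (ω p) : ℝ) : ℂ))⁻¹ * wzbar ψ p) * hcb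
        + (-((starRingEnd ℂ) (φ p) * ((a p : ℂ))⁻¹ * ψ p)
            + (starRingEnd ℂ) (φ p) * ((b p : ℂ))⁻¹ * ψ p - wzbar ψ p) * hcE
    · rw [hNphi, hNpsi, hEm2]
      linear_combination E1 - h11
  · rintro ⟨e1, e2, e3, e4⟩
    rw [hNphi, hNpsi, hEm2] at e2 e4
    rw [hLab] at e3
    have ce3 := congrArg (starRingEnd ℂ) e3
    simp only [map_add, map_sub, _root_.map_mul, map_pow, map_inv₀, Complex.conj_conj,
      Complex.conj_ofReal] at ce3
    refine Matrix.ext_iff.mp fun i j => ?_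
    fin_cases i <;> fin_cases j <;>
      simp only [Matrix.sub_apply, Matrix.of_apply, Matrix.mul_apply, Fin.sum_univ_three, Ut, Vt,
        Matrix.cons_val', Matrix.cons_val_zero, Matrix.cons_val_one, Matrix.head_cons,
        Matrix.empty_val', Matrix.cons_val_fin_one, Matrix.head_fin_const, Matrix.cons_val_two,
        Matrix.tail_cons, Fin.zero_eta, Fin.mk_one, Fin.reduceFinMk]
    · rw [hU00, hV00]
      simp only [hEmE, wzbar_ofReal_conj hdb, wzbar_ofReal_conj hdω]
      linear_combination e1 + e2
    · rw [hU01, hV01]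
      simp only [hEmE, wzbar_ofReal_conj hdb, wzbar_ofReal_conj hdω]
      linear_combination (((a p : ℂ))⁻¹ * (((Real.exp (ω p) : ℝ) : ℂ))⁻¹) * ce3
        + (-((starRingEnd ℂ) (wz (fun r => ((a r : ℝ) : ℂ)) p) * (starRingEnd ℂ) (φ p)
              * ((a p : ℂ))⁻¹ * ((a p : ℂ))⁻¹)
            - (starRingEnd ℂ) (wz (fun r => ((b r : ℝ) : ℂ)) p) * (starRingEnd ℂ) (φ p)
              * ((a p : ℂ))⁻¹ * ((b p : ℂ))⁻¹
            - (starRingEnd ℂ) (φ p) * (starRingEnd ℂ) (wz (fun r => ((ω r : ℝ) : ℂ)) p)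
              * ((a p : ℂ))⁻¹
            + (starRingEnd ℂ) (φ p) ^ 2 * ((a p : ℂ))⁻¹ * ((b p : ℂ))⁻¹
            - (starRingEnd ℂ) (φ p) ^ 2 * ((a p : ℂ))⁻¹ * ((a p : ℂ))⁻¹
            + (starRingEnd ℂ) (wz φ p) * ((a p : ℂ))⁻¹) * hcE
    · rw [wzbar_const, wz_const]
      ring
    · rw [hU10, hV10]
      simp only [hEmE, wzbar_ofReal_conj hdb, wzbar_ofReal_conj hdω]
      linear_combination (((b p : ℂ))⁻¹ * (((Real.exp (ω p) : ℝ) : ℂ))⁻¹) * e3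
        + (-(wz (fun r => ((a r : ℝ) : ℂ)) p * φ p * ((a p : ℂ))⁻¹ * ((b p : ℂ))⁻¹)
            - wz (fun r => ((b r : ℝ) : ℂ)) p * φ p * ((b p : ℂ))⁻¹ * ((b p : ℂ))⁻¹
            - φ p * wz (fun r => ((ω r : ℝ) : ℂ)) p * ((b p : ℂ))⁻¹
            - φ p ^ 2 * ((a p : ℂ))⁻¹ * ((b p : ℂ))⁻¹
            + φ p ^ 2 * ((b p : ℂ))⁻¹ * ((b p : ℂ))⁻¹
            + wz φ p * ((b p : ℂ))⁻¹) * hcE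
    · rw [hU11, hV11]
      simp only [hEmE, wzbar_ofReal_conj hdb, wzbar_ofReal_conj hdω]
      linear_combination e1 - e4
    · rw [wzbar_const, wz_const]
      ring
    · rw [wzbar_const, hV20]
      simp only [hEmE, wzbar_ofReal_conj hdb, wzbar_ofReal_conj hdω]
      linear_combination (-(((Real.exp (ω p) : ℝ) : ℂ) * wz (fun r => ((a r : ℝ) : ℂ)) p)
            - ((Real.exp (ω p) : ℝ) : ℂ) * φ p) * hca
        + (((Real.exp (ω p) : ℝ) : ℂ) * φ p) * hcb
    · rw [hU21, wz_const]
      simp only [hEmE, wzbar_ofReal_conj hdb, wzbar_ofReal_conj hdω]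
      linear_combination (((Real.exp (ω p) : ℝ) : ℂ) * (starRingEnd ℂ) (φ p)) * hca
        + (((Real.exp (ω p) : ℝ) : ℂ) * (starRingEnd ℂ) (wz (fun r => ((b r : ℝ) : ℂ)) p)
            - ((Real.exp (ω p) : ℝ) : ℂ) * (starRingEnd ℂ) (φ p)) * hcb
    · rw [hV22]
      linear_combination e1
end
end

section
/- Let D ⊆ ℂ be open and let 𝔣 : D → ℂ³ be a smooth map with 𝔣 · conj(𝔣) = 1. Then for every smooth function h : D → ℂ with |h| = 1 one has ξ[h𝔣] = h ξ[𝔣] and η[h𝔣] = h η[𝔣]. -/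
open Complex

noncomputable section

/-- The bilinear dot product u · v = u₁v₁ + u₂v₂ + u₃v₃ on ℂ³. -/
def dotC (u v : Fin 3 → ℂ) : ℂ := ∑ i, u i * v i

/-- ξ[𝔣] = 𝔣_z − (𝔣_z · conj 𝔣) 𝔣. -/
def xiF (f : ℂ → Fin 3 → ℂ) (p : ℂ) : Fin 3 → ℂ :=
  wz f p - dotC (wz f p) (fun i => starRingEnd ℂ (f p i)) • f p

/-- η[𝔣] = 𝔣_z̄ − (𝔣_z̄ · conj 𝔣) 𝔣. -/
def etaF (f : ℂ → Fin 3 → ℂ) (p : ℂ) : Fin 3 → ℂ :=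
  wzbar f p - dotC (wzbar f p) (fun i => starRingEnd ℂ (f p i)) • f p

lemma wz_smul (h : ℂ → ℂ) (f : ℂ → Fin 3 → ℂ) (p : ℂ)
    (hh : DifferentiableAt ℝ h p) (hf : DifferentiableAt ℝ f p) :
    wz (fun q => h q • f q) p = h p • wz f p + wz h p • f p := by
  simp only [wz, fderiv_fun_smul hh hf, ContinuousLinearMap.add_apply,
    ContinuousLinearMap.smul_apply, ContinuousLinearMap.smulRight_apply,
    ContinuousLinearMap.coe_smul', Pi.smul_apply]
  match_scalars <;> simp (config := {failIfUnchanged := false}) only [smul_eq_mul] <;> ring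

lemma wzbar_smul (h : ℂ → ℂ) (f : ℂ → Fin 3 → ℂ) (p : ℂ)
    (hh : DifferentiableAt ℝ h p) (hf : DifferentiableAt ℝ f p) :
    wzbar (fun q => h q • f q) p = h p • wzbar f p + wzbar h p • f p := by
  simp only [wzbar, fderiv_fun_smul hh hf, ContinuousLinearMap.add_apply,
    ContinuousLinearMap.smul_apply, ContinuousLinearMap.smulRight_apply,
    ContinuousLinearMap.coe_smul', Pi.smul_apply]
  match_scalars <;> simp (config := {failIfUnchanged := false}) only [smul_eq_mul] <;> ring

lemma key (hp fp wfp : Fin 3 → ℂ) (c b : ℂ)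
    (hc : starRingEnd ℂ c * c = 1)
    (hS : dotC fp (fun i => starRingEnd ℂ (fp i)) = 1)
    (hhp : hp = c • fp) :
    (c • wfp + b • fp) -
      dotC (c • wfp + b • fp) (fun i => starRingEnd ℂ (hp i)) • hp
      = c • (wfp - dotC wfp (fun i => starRingEnd ℂ (fp i)) • fp) := by
  subst hhp
  funext i
  simp only [dotC, Fin.sum_univ_three, Pi.add_apply, Pi.sub_apply, Pi.smul_apply,
    smul_eq_mul, map_mul] at hS ⊢
  linear_combination
    (-(c * (wfp 0 * starRingEnd ℂ (fp 0) + wfp 1 * starRingEnd ℂ (fp 1) +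
        wfp 2 * starRingEnd ℂ (fp 2)) * fp i + b * fp i)) * hc -
    (b * fp i * c * starRingEnd ℂ c) * hS

/-- For a unit-sphere valued map 𝔣 and any smooth h with |h| = 1 one has
ξ[h𝔣] = h ξ[𝔣] and η[h𝔣] = h η[𝔣]. -/
theorem statement16 (D : Set ℂ) (hD : IsOpen D)
    (f : ℂ → Fin 3 → ℂ) (hf : ContDiffOn ℝ (⊤ : ℕ∞) f D)
    (hunit : ∀ p ∈ D, dotC (f p) (fun i => starRingEnd ℂ (f p i)) = 1)
    (h : ℂ → ℂ) (hh : ContDiffOn ℝ (⊤ : ℕ∞) h D)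
    (hh1 : ∀ p ∈ D, ‖h p‖ = 1) :
    ∀ p ∈ D,
      xiF (fun q => h q • f q) p = h p • xiF f p ∧
      etaF (fun q => h q • f q) p = h p • etaF f p := by
  intro p hp
  have hfd : DifferentiableAt ℝ f p :=
    (hf.contDiffAt (hD.mem_nhds hp)).differentiableAt (by simp)
  have hhd : DifferentiableAt ℝ h p :=
    (hh.contDiffAt (hD.mem_nhds hp)).differentiableAt (by simp)
  have hc : starRingEnd ℂ (h p) * h p = 1 := by
    have h1 := hh1 p hp
    have : (Complex.normSq (h p) : ℂ) = 1 := by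
      rw [Complex.normSq_eq_norm_sq, h1]; norm_num
    rw [mul_comm, Complex.mul_conj, this]
  constructor
  · rw [xiF, wz_smul h f p hhd hfd, xiF]
    exact key _ _ _ _ _ hc (hunit p hp) rfl
  · rw [etaF, wzbar_smul h f p hhd hfd, etaF]
    exact key _ _ _ _ _ hc (hunit p hp) rfl
end
end

section
/- Let D ⊆ ℂ be open, let ω : D → ℝ, a, b : D → (0, ∞) be smooth, and let ρ, φ, ψ : D → ℂ be smooth, and assume the trace-zero normalization (a⁻¹ + b⁻¹) φ + 3ρ + ½(a_z/a − b_z/b) = 0 on D. Define the matrix-valued map U with rows (½ a_z/a + ½ ω_z + ρ + φ/a, −(ab)^{−1/2} conj(φ), i √a e^{ω/2}), ((ab)^{−1/2} e^{−ω} ψ, −½ b_z/b − ½ ω_z + ρ + φ/b, 0), (0, i √b e^{ω/2}, ρ). Then U(p) lies in the subspace g₀ ⊕ g₂ ⊕ g₃ ⊕ g₅ of sl(3,ℂ) (the sum of the eigenspaces of σ² with eigenvalues 1 and ε⁴) for every p ∈ D if and only if φ ≡ 0 on D. -/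
open Complex Matrix

noncomputable section

/-- The eigenspace g_k = {X ∈ sl(3,ℂ) : σ(X) = εᵏ X}. -/
def gk (k : ℕ) : Set M3 := {X : M3 | X.trace = 0 ∧ sigmaL X = eps ^ k • X}

/-- The matrix 𝒰. -/
def Um (ω a b : ℂ → ℝ) (ρ φ ψ : ℂ → ℂ) (p : ℂ) : M3 :=
  !![(2 : ℂ)⁻¹ * wz (fun q => (a q : ℂ)) p / (a p : ℂ)
        + (2 : ℂ)⁻¹ * wz (fun q => (ω q : ℂ)) p + ρ p + φ p / (a p : ℂ),
     -((Real.sqrt (a p * b p) : ℂ))⁻¹ * starRingEnd ℂ (φ p),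
     Complex.I * (Real.sqrt (a p) : ℂ) * (Real.exp (ω p / 2) : ℂ);
     ((Real.sqrt (a p * b p) : ℂ))⁻¹ * (Real.exp (-(ω p)) : ℂ) * ψ p,
     -(2 : ℂ)⁻¹ * wz (fun q => (b q : ℂ)) p / (b p : ℂ)
        - (2 : ℂ)⁻¹ * wz (fun q => (ω q : ℂ)) p + ρ p + φ p / (b p : ℂ),
     0;
     0, Complex.I * (Real.sqrt (b p) : ℂ) * (Real.exp (ω p / 2) : ℂ), ρ p]

lemma eps_eq : eps = Complex.exp (((Real.pi/3 : ℝ) : ℂ) * Complex.I) := by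
  unfold eps; congr 1; push_cast; ring

lemma eps3 : eps ^ 3 = -1 := by
  rw [eps_eq, ← Complex.exp_nat_mul]
  rw [show (((3:ℕ) : ℂ)) * (((Real.pi/3 : ℝ) : ℂ) * Complex.I) = Real.pi * Complex.I by
    push_cast; ring]
  exact Complex.exp_pi_mul_I

lemma sigmaL_explicit (x11 x12 x13 x21 x22 x23 x31 x32 x33 : ℂ) :
    sigmaL !![x11,x12,x13;x21,x22,x23;x31,x32,x33] =
      !![-(eps^2*eps^4*x22), -(eps^2*eps^2*x12), -(eps^2*x32);
         -(eps^4*eps^4*x21), -(eps^4*eps^2*x11), -(eps^4*x31);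
         -(eps^4*x23), -(eps^2*x13), -x33] := by
  ext i j
  fin_cases i <;> fin_cases j <;>
    simp [sigmaL, Pm, Matrix.mul_apply, Fin.sum_univ_three, Matrix.vecHead, Matrix.vecTail,
      Matrix.vecMul, dotProduct] <;>
    ring

/-- The explicit decomposition of a matrix with the zero pattern of 𝒰 into
the eigenspaces g₀, g₂, g₃, g₅. -/
lemma decomp (d1 d2 d3 u v w : ℂ) (htr : d1 + d2 + d3 = 0) :
    ∃ X₀ ∈ gk 0, ∃ X₂ ∈ gk 2, ∃ X₃ ∈ gk 3, ∃ X₅ ∈ gk 5,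
      !![d1, 0, u; v, d2, 0; 0, w, d3] = X₀ + X₂ + X₃ + X₅ := by
  refine ⟨!![(d1-d2)/2,0,0; 0,(d2-d1)/2,0; 0,0,0], ⟨?_, ?_⟩,
          !![0,0,(u-w)/2; 0,0,0; 0,-(u-w)/2,0], ⟨?_, ?_⟩,
          !![(d1+d2)/2,0,0; 0,(d1+d2)/2,0; 0,0,d3], ⟨?_, ?_⟩,
          !![0,0,(u+w)/2; v,0,0; 0,(u+w)/2,0], ⟨?_, ?_⟩, ?_⟩
  · simp [Matrix.trace_fin_three, Matrix.vecHead, Matrix.vecTail]; ring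
  · rw [sigmaL_explicit]
    ext i j
    fin_cases i <;> fin_cases j <;>
      simp [Matrix.smul_apply, smul_eq_mul, Matrix.vecHead, Matrix.vecTail]
    · linear_combination ((d2-d1)/2) * (1 - eps^3) * eps3
    · linear_combination ((d1-d2)/2) * (1 - eps^3) * eps3
  · simp [Matrix.trace_fin_three, Matrix.vecHead, Matrix.vecTail]
  · rw [sigmaL_explicit]
    ext i j
    fin_cases i <;> fin_cases j <;>
      simp [Matrix.smul_apply, smul_eq_mul, Matrix.vecHead, Matrix.vecTail] <;> ring
  · simp [Matrix.trace_fin_three, Matrix.vecHead, Matrix.vecTail]; linear_combination htr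
  · rw [sigmaL_explicit]
    ext i j
    fin_cases i <;> fin_cases j <;>
      simp [Matrix.smul_apply, smul_eq_mul, Matrix.vecHead, Matrix.vecTail]
    · linear_combination (-(d1+d2)/2 * eps^3) * eps3
    · linear_combination (-(d1+d2)/2 * eps^3) * eps3
    · linear_combination (-d3) * eps3
  · simp [Matrix.trace_fin_three, Matrix.vecHead, Matrix.vecTail]
  · rw [sigmaL_explicit]
    ext i j
    fin_cases i <;> fin_cases j <;>
      simp [Matrix.smul_apply, smul_eq_mul, Matrix.vecHead, Matrix.vecTail]
    · linear_combination (-(u+w)/2 * eps^2) * eps3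
    · linear_combination (-eps^5 * v) * eps3
    · linear_combination (-(u+w)/2 * eps^2) * eps3
  · ext i j
    fin_cases i <;> fin_cases j <;>
      simp [Matrix.add_apply, Matrix.vecHead, Matrix.vecTail] <;> ring

lemma eps_im : eps.im = Real.sqrt 3 / 2 := by
  rw [eps_eq, Complex.exp_ofReal_mul_I_im, Real.sin_pi_div_three]
lemma eps_ne_zero : eps ≠ 0 := Complex.exp_ne_zero _
lemma eps_im_ne : eps.im ≠ 0 := by rw [eps_im]; positivity
lemma eps_ne_one : eps ≠ 1 := by intro h; apply eps_im_ne; rw [h]; simp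
lemma eps_ne_neg_one : eps ≠ -1 := by intro h; apply eps_im_ne; rw [h]; simp

lemma key0 : eps ^ 0 + eps ^ 4 ≠ 0 := by
  intro h
  have h2 : eps - 1 = 0 := by linear_combination -h + eps * eps3
  exact eps_ne_one (sub_eq_zero.mp h2)

lemma key2 : eps ^ 2 + eps ^ 4 ≠ 0 := by
  intro h
  have h2 : eps * (eps - 1) = 0 := by linear_combination h - eps * eps3
  rcases mul_eq_zero.mp h2 with h3 | h3
  · exact eps_ne_zero h3
  · exact eps_ne_one (sub_eq_zero.mp h3)

lemma key3 : eps ^ 3 + eps ^ 4 ≠ 0 := by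
  intro h
  have h2 : eps + 1 = 0 := by linear_combination -h + (eps + 1) * eps3
  exact eps_ne_neg_one (eq_neg_of_add_eq_zero_left h2)

lemma key5 : eps ^ 5 + eps ^ 4 ≠ 0 := by
  intro h
  have h2 : eps * (eps + 1) = 0 := by linear_combination -h + eps * (eps + 1) * eps3
  rcases mul_eq_zero.mp h2 with h3 | h3
  · exact eps_ne_zero h3
  · exact eps_ne_neg_one (eq_neg_of_add_eq_zero_left h3)

/-- Any element of g_k for k ∈ {0,2,3,5} has vanishing (0,1) entry. -/
lemma entry01_zero {k : ℕ} (hk : eps ^ k + eps ^ 4 ≠ 0) {X : M3} (hX : X ∈ gk k) :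
    X 0 1 = 0 := by
  obtain ⟨-, hσ⟩ := hX
  rw [Matrix.eta_fin_three X, sigmaL_explicit] at hσ
  have h := congrFun (congrFun hσ 0) 1
  simp [Matrix.smul_apply, smul_eq_mul, Matrix.vecHead, Matrix.vecTail] at h
  have h2 : (eps ^ k + eps ^ 4) * X 0 1 = 0 := by linear_combination -h
  exact (mul_eq_zero.mp h2).resolve_left hk

/-- Under the trace-zero normalization, U takes values in g₀ ⊕ g₂ ⊕ g₃ ⊕ g₅
(the eigenspaces of σ² for the eigenvalues 1 and ε⁴) if and only if φ ≡ 0. -/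
theorem statement17 (D : Set ℂ) (hD : IsOpen D)
    (ω a b : ℂ → ℝ) (ρ φ ψ : ℂ → ℂ)
    (hω : ContDiffOn ℝ (⊤ : ℕ∞) ω D) (ha : ContDiffOn ℝ (⊤ : ℕ∞) a D) (hb : ContDiffOn ℝ (⊤ : ℕ∞) b D)
    (hρ : ContDiffOn ℝ (⊤ : ℕ∞) ρ D) (hφ : ContDiffOn ℝ (⊤ : ℕ∞) φ D) (hψ : ContDiffOn ℝ (⊤ : ℕ∞) ψ D)
    (hapos : ∀ p ∈ D, 0 < a p) (hbpos : ∀ p ∈ D, 0 < b p)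
    (htrace : ∀ p ∈ D,
      (((a p : ℂ))⁻¹ + ((b p : ℂ))⁻¹) * φ p + 3 * ρ p
        + (2 : ℂ)⁻¹ * (wz (fun q => (a q : ℂ)) p / (a p : ℂ)
            - wz (fun q => (b q : ℂ)) p / (b p : ℂ)) = 0) :
    (∀ p ∈ D, ∃ X₀ ∈ gk 0, ∃ X₂ ∈ gk 2, ∃ X₃ ∈ gk 3, ∃ X₅ ∈ gk 5,
        Um ω a b ρ φ ψ p = X₀ + X₂ + X₃ + X₅)
    ↔ (∀ p ∈ D, φ p = 0) := by
  constructor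
  · intro H p hp
    obtain ⟨X₀, h₀, X₂, h₂, X₃, h₃, X₅, h₅, hsum⟩ := H p hp
    have e01 := congrFun (congrFun hsum 0) 1
    rw [show (X₀ + X₂ + X₃ + X₅) 0 1 = X₀ 0 1 + X₂ 0 1 + X₃ 0 1 + X₅ 0 1 by simp,
      entry01_zero key0 h₀, entry01_zero key2 h₂, entry01_zero key3 h₃,
      entry01_zero key5 h₅] at e01
    simp only [Um, Matrix.cons_val', Matrix.cons_val_zero, Matrix.cons_val_one,
      Matrix.head_cons, Matrix.empty_val', Matrix.cons_val_fin_one, Matrix.of_apply] at e01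
    have hsq : (0:ℝ) < Real.sqrt (a p * b p) :=
      Real.sqrt_pos.mpr (mul_pos (hapos p hp) (hbpos p hp))
    have hne : ((Real.sqrt (a p * b p) : ℝ) : ℂ) ≠ 0 := by
      exact_mod_cast ne_of_gt hsq
    rcases mul_eq_zero.mp (neg_eq_zero.mp (by linear_combination e01 :
        -(((Real.sqrt (a p * b p) : ℝ) : ℂ)⁻¹ * starRingEnd ℂ (φ p)) = 0)) with h | h
    · exact absurd (inv_eq_zero.mp h) hne
    · simpa using congrArg (starRingEnd ℂ) h
  · intro H p hp
    have hφ0 : φ p = 0 := H p hp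
    obtain ⟨X₀, h₀, X₂, h₂, X₃, h₃, X₅, h₅, hsum⟩ :=
      decomp
        ((2 : ℂ)⁻¹ * wz (fun q => (a q : ℂ)) p / (a p : ℂ)
          + (2 : ℂ)⁻¹ * wz (fun q => (ω q : ℂ)) p + ρ p + φ p / (a p : ℂ))
        (-(2 : ℂ)⁻¹ * wz (fun q => (b q : ℂ)) p / (b p : ℂ)
          - (2 : ℂ)⁻¹ * wz (fun q => (ω q : ℂ)) p + ρ p + φ p / (b p : ℂ))
        (ρ p)
        (Complex.I * (Real.sqrt (a p) : ℂ) * (Real.exp (ω p / 2) : ℂ))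
        (((Real.sqrt (a p * b p) : ℂ))⁻¹ * (Real.exp (-(ω p)) : ℂ) * ψ p)
        (Complex.I * (Real.sqrt (b p) : ℂ) * (Real.exp (ω p / 2) : ℂ))
        (by linear_combination htrace p hp)
    refine ⟨X₀, h₀, X₂, h₂, X₃, h₃, X₅, h₅, ?_⟩
    rw [← hsum]
    ext i j
    fin_cases i <;> fin_cases j <;>
      simp [Um, hφ0, Matrix.vecHead, Matrix.vecTail]
end
end
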